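/- For k ∈ {1,2}, let μ_k ∈ ℝ, σ_k > 0, π_k ∈ (0,1), c_k > 0, and let ψ_k be a probability density on [-1,1] with characteristic transform ψ̂_k(t) = ∫_{-1}^1 e^{itu} ψ_k(u) du. Suppose that for every t ∈ ℝ: exp(itμ₁) exp(-σ₁²t²/2) ( π₁ + (1-π₁) ψ̂₁(c₁ t) ) = exp(itμ₂) exp(-σ₂²t²/2) ( π₂ + (1-π₂) ψ̂₂(c₂ t) ). Then σ₁ = σ₂. -/

import Mathlib

/-!
Taking moduli removes the phases `exp (i t μₖ)`. By the Riemann–Lebesgue lemma the mixture factor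
`πₖ + (1 - πₖ) ψ̂ₖ (cₖ t)` tends to `πₖ ≠ 0` as `t → ∞`, so if `σ₁ < σ₂`, say, dividing by
`exp (-σ₁² t² / 2)` makes the left-hand side tend to `π₁` and the right-hand side to `0`.
-/

open MeasureTheory Set Filter Topology Real FourierTransform

noncomputable def charTransformIcc (ψ : ℝ → ℝ) (t : ℝ) : ℂ :=
  ∫ u in Icc (-1 : ℝ) 1, Complex.exp (Complex.I * t * u) * (ψ u : ℂ)

lemma charTransformIcc_eq_fourier (ψ : ℝ → ℝ) (t : ℝ) :
    charTransformIcc ψ t =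
      𝓕 (fun u ↦ (((Icc (-1 : ℝ) 1).indicator ψ u : ℝ) : ℂ)) (-t / (2 * π)) := by
  rw [Real.fourier_real_eq_integral_exp_smul, charTransformIcc,
    ← integral_indicator measurableSet_Icc]
  congr 1 with u
  by_cases hu : u ∈ Icc (-1 : ℝ) 1
  · simp only [indicator_of_mem hu, smul_eq_mul]
    congr 2
    field_simp
    push_cast
    ring
  · simp [indicator_of_notMem hu]

-- No integrability is needed: for non-integrable `ψ` the transform is the junk value `0`.
lemma tendsto_charTransformIcc_cocompact (ψ : ℝ → ℝ) :
    Tendsto (charTransformIcc ψ) (cocompact ℝ) (𝓝 0) := by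
  have hscale : Tendsto (fun t : ℝ ↦ -t / (2 * π)) (cocompact ℝ) (cocompact ℝ) := by
    refine (tendsto_cocompact_mul_left₀ (by simp [pi_ne_zero] : -(2 * π)⁻¹ ≠ 0)).congr fun t ↦ ?_
    ring
  exact ((Real.zero_at_infty_fourier _).comp hscale).congr fun t ↦
    (charTransformIcc_eq_fourier ψ t).symm

lemma tendsto_mixture_atTop (ψ : ℝ → ℝ) (p : ℝ) {c : ℝ} (hc : 0 < c) :
    Tendsto (fun t : ℝ ↦ (p : ℂ) + ((1 - p : ℝ) : ℂ) * charTransformIcc ψ (c * t)) atTop (𝓝 p) := by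
  have hψ : Tendsto (fun t ↦ charTransformIcc ψ (c * t)) atTop (𝓝 0) :=
    (tendsto_charTransformIcc_cocompact ψ).comp
      ((tendsto_id.const_mul_atTop hc).mono_right atTop_le_cocompact)
  simpa using tendsto_const_nhds.add (hψ.const_mul ((1 - p : ℝ) : ℂ))

lemma tendsto_gaussian_atTop {d : ℝ} (hd : 0 < d) :
    Tendsto (fun t : ℝ ↦ exp (-(d * t ^ 2) / 2)) atTop (𝓝 0) := by
  refine tendsto_exp_atBot.comp (Tendsto.atBot_div_const two_pos (tendsto_neg_atTop_atBot.comp ?_))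
  exact (tendsto_pow_atTop two_ne_zero).const_mul_atTop hd

lemma sq_le_sq_of_gaussian_mul_eq {σ₁ σ₂ a b : ℝ} {F G : ℝ → ℝ}
    (hF : Tendsto F atTop (𝓝 a)) (ha : a ≠ 0) (hG : Tendsto G atTop (𝓝 b))
    (h : ∀ t, exp (-(σ₁ ^ 2 * t ^ 2) / 2) * F t = exp (-(σ₂ ^ 2 * t ^ 2) / 2) * G t) :
    σ₂ ^ 2 ≤ σ₁ ^ 2 := by
  by_contra! hlt
  have hF' : ∀ t, F t = exp (-((σ₂ ^ 2 - σ₁ ^ 2) * t ^ 2) / 2) * G t := fun t ↦ by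
    rw [← mul_right_inj' (exp_pos (-(σ₁ ^ 2 * t ^ 2) / 2)).ne', h, ← mul_assoc, ← exp_add]
    ring_nf
  have hF0 : Tendsto F atTop (𝓝 0) := by
    simpa only [zero_mul, ← hF'] using (tendsto_gaussian_atTop (sub_pos.2 hlt)).mul hG
  exact ha (tendsto_nhds_unique hF hF0)

theorem stmt8_general
    (μ₁ μ₂ σ₁ σ₂ π₁ π₂ c₁ c₂ : ℝ) (ψ₁ ψ₂ : ℝ → ℝ)
    (hσ₁ : 0 < σ₁) (hσ₂ : 0 < σ₂)
    (hπ₁ : π₁ ∈ Ioo (0 : ℝ) 1) (hπ₂ : π₂ ∈ Ioo (0 : ℝ) 1)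
    (hc₁ : 0 < c₁) (hc₂ : 0 < c₂)
    (heq : ∀ t : ℝ,
      Complex.exp (Complex.I * t * μ₁) * (Real.exp (-(σ₁ ^ 2 * t ^ 2) / 2) : ℂ) *
          ((π₁ : ℂ) + (1 - π₁ : ℝ) * charTransformIcc ψ₁ (c₁ * t)) =
        Complex.exp (Complex.I * t * μ₂) * (Real.exp (-(σ₂ ^ 2 * t ^ 2) / 2) : ℂ) *
          ((π₂ : ℂ) + (1 - π₂ : ℝ) * charTransformIcc ψ₂ (c₂ * t))) :
    σ₁ = σ₂ := by
  have hnorm : ∀ t : ℝ,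
      exp (-(σ₁ ^ 2 * t ^ 2) / 2) *
          ‖(π₁ : ℂ) + ((1 - π₁ : ℝ) : ℂ) * charTransformIcc ψ₁ (c₁ * t)‖ =
        exp (-(σ₂ ^ 2 * t ^ 2) / 2) *
          ‖(π₂ : ℂ) + ((1 - π₂ : ℝ) : ℂ) * charTransformIcc ψ₂ (c₂ * t)‖ := fun t ↦ by
    simpa only [norm_mul, mul_assoc, ← Complex.ofReal_mul, Complex.norm_exp_I_mul_ofReal,
      Complex.norm_real, norm_of_nonneg (exp_pos _).le, one_mul] using congrArg norm (heq t)
  have h₁ := (tendsto_mixture_atTop ψ₁ π₁ hc₁).norm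
  have h₂ := (tendsto_mixture_atTop ψ₂ π₂ hc₂).norm
  have hπ₁' : ‖(π₁ : ℂ)‖ ≠ 0 := by simpa using hπ₁.1.ne'
  have hπ₂' : ‖(π₂ : ℂ)‖ ≠ 0 := by simpa using hπ₂.1.ne'
  refine (sq_eq_sq₀ hσ₁.le hσ₂.le).1 (le_antisymm ?_ ?_)
  · exact sq_le_sq_of_gaussian_mul_eq h₂ hπ₂' h₁ fun t ↦ (hnorm t).symm
  · exact sq_le_sq_of_gaussian_mul_eq h₁ hπ₁' h₂ hnorm

theorem stmt8
    (μ₁ μ₂ σ₁ σ₂ π₁ π₂ c₁ c₂ : ℝ) (ψ₁ ψ₂ : ℝ → ℝ)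
    (hσ₁ : 0 < σ₁) (hσ₂ : 0 < σ₂)
    (hπ₁ : π₁ ∈ Ioo (0 : ℝ) 1) (hπ₂ : π₂ ∈ Ioo (0 : ℝ) 1)
    (hc₁ : 0 < c₁) (hc₂ : 0 < c₂)
    (hψ₁m : Measurable ψ₁) (hψ₁nn : ∀ u, 0 ≤ ψ₁ u)
    (hψ₁supp : ∀ u, u ∉ Icc (-1 : ℝ) 1 → ψ₁ u = 0)
    (hψ₁int : ∫ u in Icc (-1 : ℝ) 1, ψ₁ u = 1)
    (hψ₂m : Measurable ψ₂) (hψ₂nn : ∀ u, 0 ≤ ψ₂ u)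
    (hψ₂supp : ∀ u, u ∉ Icc (-1 : ℝ) 1 → ψ₂ u = 0)
    (hψ₂int : ∫ u in Icc (-1 : ℝ) 1, ψ₂ u = 1)
    (heq : ∀ t : ℝ,
      Complex.exp (Complex.I * t * μ₁) * (Real.exp (-(σ₁ ^ 2 * t ^ 2) / 2) : ℂ) *
          ((π₁ : ℂ) + (1 - π₁ : ℝ) * charTransformIcc ψ₁ (c₁ * t)) =
        Complex.exp (Complex.I * t * μ₂) * (Real.exp (-(σ₂ ^ 2 * t ^ 2) / 2) : ℂ) *
          ((π₂ : ℂ) + (1 - π₂ : ℝ) * charTransformIcc ψ₂ (c₂ * t))) :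
    σ₁ = σ₂ :=
  stmt8_general μ₁ μ₂ σ₁ σ₂ π₁ π₂ c₁ c₂ ψ₁ ψ₂ hσ₁ hσ₂ hπ₁ hπ₂ hc₁ hc₂ heq
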